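/- arXiv:2103.05176 — 2 statements merged into one kernel-verified Lean document; each statement's English description precedes it below -/
import Mathlib

section
/- Let (x(t))_{t≥0} and (x̄(t))_{t≥1} be real-valued random sequences such that for every t ≥ 1, x(t-1) and x̄(t) have the same distribution, and suppose there exists an almost-surely finite random time τ such that x(t) = x̄(t) for all t ≥ τ. Assume h is a bounded measurable function, E[h(x(t))] converges to a limit L as t → ∞, and the interchange of summation and expectation is valid (e.g., E[∑_{t=k+1}^{τ-1} |h(x(t)) - h(x̄(t))|] < ∞). Then for every fixed k ≥ 0, the estimator ĥ_k = h(x(k)) + ∑_{t=k+1}^{τ-1} [h(x(t)) - h(x̄(t))] satisfies E[ĥ_k] = L. -/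
/-! Since `x (t-1)` and `x̄ t` have the same law, the expected increment `E[h(x t) - h(x̄ t)]`
is `E[h(x t)] - E[h(x (t-1))]`; and since the chains agree from `τ` on, truncating the increments
at `τ` does not change them. Hence the expectation of the sum of increments is a telescoping
series whose partial sums `E[h(x n)] - E[h(x k)]` tend to `L - E[h(x k)]`. -/

open MeasureTheory ProbabilityTheory Filter Finset Topology

theorem tsum_eq_sub_of_telescoping {G : Type*} [AddCommGroup G] [TopologicalSpace G]
    [IsTopologicalAddGroup G] [T2Space G] {a J : ℕ → G} {k : ℕ} {L : G} (ha : Summable a)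
    (hzero : ∀ t ≤ k, a t = 0) (hstep : ∀ t, k ≤ t → a (t + 1) = J (t + 1) - J t)
    (hJ : Tendsto J atTop (𝓝 L)) :
    ∑' t, a t = L - J k := by
  have hpartial : ∀ n, k ≤ n → ∑ t ∈ range (n + 1), a t = J n - J k := by
    refine Nat.le_induction ?_ fun n hn ih => ?_
    · rw [sub_self]
      exact sum_eq_zero fun t ht => hzero t (Nat.lt_succ_iff.mp (mem_range.mp ht))
    · rw [sum_range_succ, ih, hstep n hn]
      abel
  refine tendsto_nhds_unique (ha.hasSum.tendsto_sum_nat.comp (tendsto_add_atTop_nat 1)) ?_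
  exact (hJ.sub_const (J k)).congr' (eventually_atTop.2 ⟨k, fun n hn => (hpartial n hn).symm⟩)

theorem sum_range_abs_ite_mem_le (s : Finset ℕ) (d : ℕ → ℝ) (N : ℕ) :
    ∑ t ∈ range N, |if t ∈ s then d t else 0| ≤ ∑ t ∈ s, |d t| := by
  simp_rw [apply_ite (|·|), abs_zero]
  rw [sum_ite_mem]
  exact sum_le_sum_of_subset_of_nonneg inter_subset_right fun t _ _ => abs_nonneg _

theorem ite_increment_eq_of_meet {Ω : Type*} {x xb : ℕ → Ω → ℝ} {τ : Ω → ℕ} {h : ℝ → ℝ}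
    {k t : ℕ} (hmeet : ∀ ω, ∀ t, τ ω ≤ t → x t ω = xb t ω) (ω : Ω) :
    (if t ∈ Ico (k + 1) (τ ω) then h (x t ω) - h (xb t ω) else 0)
      = if k < t then h (x t ω) - h (xb t ω) else 0 := by
  by_cases hlt : t < τ ω
  · simp [mem_Ico, hlt]
  · simp [hmeet ω t (not_lt.mp hlt)]

section

variable {Ω : Type*} [MeasurableSpace Ω] {μ : Measure Ω}

theorem summable_integral_of_sum_abs_le {f : ℕ → Ω → ℝ} {g : Ω → ℝ}
    (hf : ∀ t, Integrable (f t) μ) (hg : Integrable g μ)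
    (hbound : ∀ N, ∀ᵐ ω ∂μ, ∑ t ∈ range N, |f t ω| ≤ g ω) :
    Summable fun t => ∫ ω, f t ω ∂μ := by
  refine Summable.of_norm_bounded (g := fun t => ∫ ω, |f t ω| ∂μ) ?_
    fun t => norm_integral_le_integral_norm (f t)
  refine summable_of_sum_range_le (c := ∫ ω, g ω ∂μ)
    (fun t => integral_nonneg fun ω => abs_nonneg _) fun N => ?_
  rw [← integral_finsetSum _ fun t _ => (hf t).abs]
  exact integral_mono_ae (integrable_finsetSum _ fun t _ => (hf t).abs) hg (hbound N)

theorem integrable_comp_of_abs_le [IsFiniteMeasure μ] {α : Type*} [MeasurableSpace α]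
    {h : α → ℝ} {C : ℝ} (hh : Measurable h) (hbd : ∀ r, |h r| ≤ C) {X : Ω → α}
    (hX : Measurable X) : Integrable (fun ω => h (X ω)) μ :=
  Integrable.of_bound (hh.comp hX).aestronglyMeasurable C (ae_of_all _ fun ω => hbd (X ω))

variable {x xb : ℕ → Ω → ℝ} {τ : Ω → ℕ} {h : ℝ → ℝ} {k t : ℕ}

theorem integral_ite_increment_of_le (ht : t ≤ k) :
    ∫ ω, (if t ∈ Ico (k + 1) (τ ω) then h (x t ω) - h (xb t ω) else 0) ∂μ = 0 := by
  have hnot ω : t ∉ Ico (k + 1) (τ ω) := fun hmem => absurd (mem_Ico.1 hmem).1 (by omega)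
  simp_rw [if_neg (hnot _), integral_zero]

variable [IsFiniteMeasure μ]

theorem integrable_ite_increment {C : ℝ} (hxm : ∀ t, Measurable (x t))
    (hxbm : ∀ t, Measurable (xb t)) (hmeas : Measurable h) (hbd : ∀ r : ℝ, |h r| ≤ C)
    (hmeet : ∀ ω, ∀ t, τ ω ≤ t → x t ω = xb t ω) :
    Integrable (fun ω => if t ∈ Ico (k + 1) (τ ω) then h (x t ω) - h (xb t ω) else 0) μ := by
  simp_rw [ite_increment_eq_of_meet hmeet]
  split_ifs
  · exact (integrable_comp_of_abs_le hmeas hbd (hxm t)).sub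
      (integrable_comp_of_abs_le hmeas hbd (hxbm t))
  · exact integrable_zero _ _ _

theorem integral_ite_increment_succ {C : ℝ} (hxm : ∀ t, Measurable (x t))
    (hxbm : ∀ t, Measurable (xb t)) (hmeas : Measurable h) (hbd : ∀ r : ℝ, |h r| ≤ C)
    (hlaw : μ.map (x t) = μ.map (xb (t + 1))) (hmeet : ∀ ω, ∀ t, τ ω ≤ t → x t ω = xb t ω)
    (ht : k ≤ t) :
    ∫ ω, (if t + 1 ∈ Ico (k + 1) (τ ω) then h (x (t + 1) ω) - h (xb (t + 1) ω) else 0) ∂μ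
      = ∫ ω, h (x (t + 1) ω) ∂μ - ∫ ω, h (x t ω) ∂μ := by
  have hident : IdentDistrib (x t) (xb (t + 1)) μ μ :=
    ⟨(hxm t).aemeasurable, (hxbm (t + 1)).aemeasurable, hlaw⟩
  simp_rw [ite_increment_eq_of_meet hmeet, if_pos (Nat.lt_succ_of_le ht)]
  rw [integral_sub (integrable_comp_of_abs_le hmeas hbd (hxm _))
    (integrable_comp_of_abs_le hmeas hbd (hxbm _))]
  exact congrArg _ (hident.comp hmeas).integral_eq.symm

end

theorem stmt0_general {Ω : Type*} [MeasurableSpace Ω] (μ : Measure Ω) [IsProbabilityMeasure μ]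
    (x xb : ℕ → Ω → ℝ) (τ : Ω → ℕ) (h : ℝ → ℝ) (L C : ℝ)
    (hxm : ∀ t, Measurable (x t)) (hxbm : ∀ t, Measurable (xb t))
    (hmeas : Measurable h) (hbd : ∀ r : ℝ, |h r| ≤ C)
    (hid : ∀ t : ℕ, 1 ≤ t → μ.map (x (t - 1)) = μ.map (xb t))
    (hmeet : ∀ ω, ∀ t, τ ω ≤ t → x t ω = xb t ω)
    (hconv : Tendsto (fun t => ∫ ω, h (x t ω) ∂μ) atTop (nhds L))
    (k : ℕ)
    (habs : Integrable
      (fun ω => ∑ t ∈ Finset.Ico (k + 1) (τ ω), |h (x t ω) - h (xb t ω)|) μ)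
    (hint : Integrable
      (fun ω => h (x k ω) + ∑ t ∈ Finset.Ico (k + 1) (τ ω), (h (x t ω) - h (xb t ω))) μ)
    (hswap : ∫ ω, (∑ t ∈ Finset.Ico (k + 1) (τ ω), (h (x t ω) - h (xb t ω))) ∂μ
      = ∑' t : ℕ, ∫ ω,
          (if k + 1 ≤ t ∧ t < τ ω then h (x t ω) - h (xb t ω) else 0) ∂μ) :
    ∫ ω, (h (x k ω) + ∑ t ∈ Finset.Ico (k + 1) (τ ω), (h (x t ω) - h (xb t ω))) ∂μ = L := by
  simp_rw [← mem_Ico] at hswap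
  have hsummable := summable_integral_of_sum_abs_le
    (fun t => integrable_ite_increment hxm hxbm hmeas hbd hmeet) habs
    fun N => ae_of_all _ fun ω => sum_range_abs_ite_mem_le _ _ N
  have hk_int := integrable_comp_of_abs_le (μ := μ) hmeas hbd (hxm k)
  rw [integral_add hk_int ((hint.sub hk_int).congr (ae_of_all _ fun ω => by simp)), hswap,
    tsum_eq_sub_of_telescoping hsummable (fun t => integral_ite_increment_of_le)
      (fun t => integral_ite_increment_succ hxm hxbm hmeas hbd (hid (t + 1) le_add_self) hmeet)
      hconv]
  ring

/-- Glynn–Rhee debiasing identity: for coupled chains with matched marginals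
(`x (t-1) ~ x̄ t`) that meet at the a.s. finite random time `τ`, and a bounded
measurable `h` with `E[h(x t)] → L`, assuming the interchange of summation and
expectation is valid, the estimator
`ĥ_k = h(x k) + ∑_{t=k+1}^{τ-1} (h(x t) - h(x̄ t))` has expectation `L`. -/
theorem stmt0 {Ω : Type*} [MeasurableSpace Ω] (μ : Measure Ω) [IsProbabilityMeasure μ]
    (x xb : ℕ → Ω → ℝ) (τ : Ω → ℕ) (h : ℝ → ℝ) (L C : ℝ)
    (hxm : ∀ t, Measurable (x t)) (hxbm : ∀ t, Measurable (xb t)) (hτm : Measurable τ)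
    (hmeas : Measurable h) (hbd : ∀ r : ℝ, |h r| ≤ C)
    (hid : ∀ t : ℕ, 1 ≤ t → μ.map (x (t - 1)) = μ.map (xb t))
    (hmeet : ∀ ω, ∀ t, τ ω ≤ t → x t ω = xb t ω)
    (hconv : Tendsto (fun t => ∫ ω, h (x t ω) ∂μ) atTop (nhds L))
    (k : ℕ)
    (habs : Integrable
      (fun ω => ∑ t ∈ Finset.Ico (k + 1) (τ ω), |h (x t ω) - h (xb t ω)|) μ)
    (hint : Integrable
      (fun ω => h (x k ω) + ∑ t ∈ Finset.Ico (k + 1) (τ ω), (h (x t ω) - h (xb t ω))) μ)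
    (hswap : ∫ ω, (∑ t ∈ Finset.Ico (k + 1) (τ ω), (h (x t ω) - h (xb t ω))) ∂μ
      = ∑' t : ℕ, ∫ ω,
          (if k + 1 ≤ t ∧ t < τ ω then h (x t ω) - h (xb t ω) else 0) ∂μ) :
    ∫ ω, (h (x k ω) + ∑ t ∈ Finset.Ico (k + 1) (τ ω), (h (x t ω) - h (xb t ω))) ∂μ = L :=
  stmt0_general μ x xb τ h L C hxm hxbm hmeas hbd hid hmeet hconv k habs hint hswap
end

section
/- For integers k ≤ l and random sequences x(t), x̄(t) meeting at time τ (with x(t) = x̄(t) for t ≥ τ), the average of the estimators ĥ_q = h(x(q)) + ∑_{t=q+1}^{τ-1} [h(x(t)) - h(x̄(t))] over q = k, ..., l satisfies the identity (1/(l-k+1)) ∑_{q=k}^l ĥ_q = (1/(l-k+1)) ∑_{t=k}^l h(x(t)) + ∑_{t=k+1}^{τ-1} [min(l-k+1, t-k)/(l-k+1)] · [h(x(t)) - h(x̄(t))]. -/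
open Finset

theorem card_filter_Icc_lt {k l : ℕ} (hkl : k ≤ l) (t : ℕ) :
    #{q ∈ Icc k l | q < t} = min (l - k + 1) (t - k) := by
  have : {q ∈ Icc k l | q < t} = Ico k (min (l + 1) t) := by
    ext q
    simp only [mem_filter, mem_Icc, mem_Ico]
    omega
  rw [this, Nat.card_Ico]
  omega

/-- After exchanging the sums, `f t` is counted once for each `q ∈ [k, l]` with `q < t`. -/
theorem sum_Icc_sum_Ico_eq_sum_min_nsmul {M : Type*} [AddCommMonoid M] (f : ℕ → M)
    {k l : ℕ} (hkl : k ≤ l) (τ : ℕ) :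
    ∑ q ∈ Icc k l, ∑ t ∈ Ico (q + 1) τ, f t
      = ∑ t ∈ Ico (k + 1) τ, min (l - k + 1) (t - k) • f t := by
  rw [sum_comm' (t' := Ico (k + 1) τ) (s' := fun t => {q ∈ Icc k l | q < t})]
  · simp only [sum_const, card_filter_Icc_lt hkl]
  · intro q t
    simp only [mem_Icc, mem_Ico, mem_filter]
    omega

theorem stmt12_general {A : Type*} (x xb : ℕ → A) (h : A → ℝ)
    (τ : ℕ)
    (k l : ℕ) (hkl : k ≤ l) :
    (1 / ((l : ℝ) - k + 1)) *
        ∑ q ∈ Finset.Icc k l,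
          (h (x q) + ∑ t ∈ Finset.Ico (q + 1) τ, (h (x t) - h (xb t)))
      = (1 / ((l : ℝ) - k + 1)) * ∑ t ∈ Finset.Icc k l, h (x t)
        + ∑ t ∈ Finset.Ico (k + 1) τ,
            ((min (l - k + 1) (t - k) : ℕ) : ℝ) / ((l : ℝ) - k + 1) *
              (h (x t) - h (xb t)) := by
  rw [sum_add_distrib, sum_Icc_sum_Ico_eq_sum_min_nsmul _ hkl, mul_add, mul_sum (Ico (k + 1) τ)]
  congr 1
  refine sum_congr rfl fun t _ => ?_
  rw [nsmul_eq_mul]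
  ring

/-- Time-averaged unbiased estimator identity: averaging the Glynn–Rhee estimators
`ĥ_q` over `q = k,…,l` gives an ergodic average plus a weighted bias correction. -/
theorem stmt12 {A : Type*} (x xb : ℕ → A) (h : A → ℝ)
    (τ : ℕ) (hτ1 : 1 ≤ τ) (hmeet : ∀ t : ℕ, τ ≤ t → x t = xb t)
    (k l : ℕ) (hkl : k ≤ l) :
    (1 / ((l : ℝ) - k + 1)) *
        ∑ q ∈ Finset.Icc k l,
          (h (x q) + ∑ t ∈ Finset.Ico (q + 1) τ, (h (x t) - h (xb t)))
      = (1 / ((l : ℝ) - k + 1)) * ∑ t ∈ Finset.Icc k l, h (x t)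
        + ∑ t ∈ Finset.Ico (k + 1) τ,
            ((min (l - k + 1) (t - k) : ℕ) : ℝ) / ((l : ℝ) - k + 1) *
              (h (x t) - h (xb t)) :=
  stmt12_general x xb h τ k l hkl
end
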